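/- Let (T_n)_{n≥1} be a sequence of rooted phylogenetic trees with edge lengths, where T_n has taxon set X_n = {1,...,n}, cluster family E_n, edge lengths λ^{(n)} with λ_e^{(n)} ∈ [0,1] for all e, and survival probabilities p^{(n)}, and let φ_n be the future phylogenetic diversity under the g-FOB model. Assume (C1): there exist ε > 0, A ≥ 0 and α ≥ 0 such that for every n the number of indices i with p_i^{(n)} ∉ [ε, 1−ε] is at most A n^α; and (C2*): there exist B > 0 and β such that for every n, the sum over pendant edges e of (λ_e^{(n)})² is at least B n^β. Then for every n, Var[φ_n] ≥ ε² (B n^β − A n^α). -/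

import Mathlib

/-!
Write `Y c` for the indicator that some taxon of the cluster `c` survives, and compare `φ` with
`g = ∑_{i ∈ G} λ_{i} Y {i}`. From `0 ≤ Var[φ - g]` we get `Var[φ] ≥ 2 cov[φ, g] - Var[g]`.
The survival indicators of distinct taxa are independent, so
`Var[g] = ∑_{i ∈ G} λ_{i}² p_i (1 - p_i)`. Every `cov[Y c, Y {i}]` is nonnegative: it vanishes
when `i ∉ c` by independence, and equals `p_i (1 - P(Y c = 1))` when `i ∈ c`, because then
`Y {i} ≤ Y c`. Keeping only the pendant terms gives `cov[φ, g] ≥ Var[g]`, hence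
`Var[φ] ≥ ∑_{i ∈ G} λ_{i}² p_i (1 - p_i)`. For `G` the taxa with `p_i ∈ [ε, 1 - ε]` each term is
at least `ε² λ_{i}²`, and since `λ ≤ 1`, (C1) and (C2*) give
`∑_{i ∈ G} λ_{i}² ≥ B (n+1)^β - A (n+1)^α`.
-/

open MeasureTheory ProbabilityTheory Finset
open scoped Classical

section IndicatorCovariance

variable {Ω : Type*} [MeasurableSpace Ω] {μ : Measure Ω}

lemma memLp_indicator_one [IsFiniteMeasure μ] {A : Set Ω} (hA : MeasurableSet A)
    (q : ENNReal) : MemLp (A.indicator (1 : Ω → ℝ)) q μ :=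
  memLp_indicator_const q hA 1 (.inr (measure_ne_top μ A))

lemma covariance_indicator_one_of_subset [IsProbabilityMeasure μ] {A B : Set Ω}
    (hA : MeasurableSet A) (hB : MeasurableSet B) (hAB : A ⊆ B) :
    cov[B.indicator 1, A.indicator 1; μ] = μ.real A * (1 - μ.real B) := by
  have hprod : B.indicator 1 * A.indicator (1 : Ω → ℝ) = A.indicator 1 := by
    ext ω
    by_cases hω : ω ∈ A
    · simp [hω, hAB hω]
    · simp [hω]
  rw [covariance_eq_sub (memLp_indicator_one hB 2) (memLp_indicator_one hA 2), hprod,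
    integral_indicator_one hA, integral_indicator_one hB]
  ring

lemma variance_indicator_one [IsProbabilityMeasure μ] {A : Set Ω} (hA : MeasurableSet A) :
    Var[A.indicator 1; μ] = μ.real A * (1 - μ.real A) := by
  rw [← covariance_self (measurable_one.indicator hA).aemeasurable,
    covariance_indicator_one_of_subset hA hA subset_rfl]

lemma two_mul_covariance_sub_variance_le_variance [IsFiniteMeasure μ] {f g : Ω → ℝ}
    (hf : MemLp f 2 μ) (hg : MemLp g 2 μ) :
    2 * cov[f, g; μ] - Var[g; μ] ≤ Var[f; μ] := by
  have := variance_nonneg (f - g) μ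
  rw [variance_sub hf hg] at this
  linarith

end IndicatorCovariance

section ClusterSurvival

variable {Ω ι : Type*} {X : ι → Ω → Bool}

def clusterSurvives (X : ι → Ω → Bool) (c : Finset ι) : Set Ω :=
  {ω | ∃ i ∈ c, X i ω = true}

lemma clusterSurvives_mono {c d : Finset ι} (h : c ⊆ d) :
    clusterSurvives X c ⊆ clusterSurvives X d :=
  fun _ ⟨i, hi, hXi⟩ => ⟨i, h hi, hXi⟩

lemma clusterSurvives_singleton (i : ι) : clusterSurvives X {i} = {ω | X i ω = true} := by
  simp [clusterSurvives]

lemma indicator_clusterSurvives_apply (c : Finset ι) (ω : Ω)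
    [Decidable (∃ i ∈ c, X i ω = true)] :
    (clusterSurvives X c).indicator (1 : Ω → ℝ) ω = if ∃ i ∈ c, X i ω = true then 1 else 0 := by
  simp [clusterSurvives, Set.indicator_apply]

lemma indicator_clusterSurvives_eq_comp (c : Finset ι) :
    (clusterSurvives X c).indicator (1 : Ω → ℝ)
      = ({v | ∃ j, v j = true} : Set (c → Bool)).indicator 1 ∘ fun ω (j : c) => X j ω := by
  ext ω
  simp [clusterSurvives, Set.indicator_apply]

variable [MeasurableSpace Ω] {μ : Measure Ω}

lemma measurableSet_clusterSurvives (hm : ∀ i, Measurable (X i)) (c : Finset ι) :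
    MeasurableSet (clusterSurvives X c) := by
  have : clusterSurvives X c = ⋃ i ∈ c, X i ⁻¹' {true} := by
    ext ω
    simp [clusterSurvives]
  rw [this]
  exact Finset.measurableSet_biUnion c fun i _ => hm i (measurableSet_singleton true)

lemma indepFun_indicator_clusterSurvives (hm : ∀ i, Measurable (X i)) (hind : iIndepFun X μ)
    {c d : Finset ι} (hcd : Disjoint c d) :
    IndepFun ((clusterSurvives X c).indicator (1 : Ω → ℝ))
      ((clusterSurvives X d).indicator (1 : Ω → ℝ)) μ := by
  rw [indicator_clusterSurvives_eq_comp c, indicator_clusterSurvives_eq_comp d]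
  exact (hind.indepFun_finset c d hcd hm).comp Measurable.of_discrete Measurable.of_discrete

lemma covariance_indicator_clusterSurvives_of_disjoint (hm : ∀ i, Measurable (X i))
    (hind : iIndepFun X μ) {c d : Finset ι} (hcd : Disjoint c d) :
    cov[(clusterSurvives X c).indicator 1, (clusterSurvives X d).indicator 1; μ] = 0 := by
  have := hind.isProbabilityMeasure
  exact (indepFun_indicator_clusterSurvives hm hind hcd).covariance_eq_zero
    (memLp_indicator_one (measurableSet_clusterSurvives hm c) 2)
    (memLp_indicator_one (measurableSet_clusterSurvives hm d) 2)

lemma covariance_indicator_clusterSurvives_singleton_nonneg (hm : ∀ i, Measurable (X i))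
    (hind : iIndepFun X μ) (c : Finset ι) (i : ι) :
    0 ≤ cov[(clusterSurvives X c).indicator 1, (clusterSurvives X {i}).indicator 1; μ] := by
  have := hind.isProbabilityMeasure
  by_cases hi : i ∈ c
  · rw [covariance_indicator_one_of_subset (measurableSet_clusterSurvives hm {i})
      (measurableSet_clusterSurvives hm c) (clusterSurvives_mono (singleton_subset_iff.2 hi))]
    exact mul_nonneg measureReal_nonneg (sub_nonneg.2 measureReal_le_one)
  · rw [covariance_indicator_clusterSurvives_of_disjoint hm hind
      (disjoint_singleton_right.2 hi)]

lemma variance_indicator_clusterSurvives_singleton (hm : ∀ i, Measurable (X i))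
    (hind : iIndepFun X μ) (i : ι) :
    Var[(clusterSurvives X {i}).indicator 1; μ]
      = μ.real {ω | X i ω = true} * (1 - μ.real {ω | X i ω = true}) := by
  have := hind.isProbabilityMeasure
  rw [variance_indicator_one (measurableSet_clusterSurvives hm {i}), clusterSurvives_singleton]

lemma mul_variance_le_covariance_sum_indicator (hm : ∀ i, Measurable (X i))
    (hind : iIndepFun X μ) {E : Finset (Finset ι)} {lam : Finset ι → ℝ}
    (hlam : ∀ c ∈ E, 0 ≤ lam c) {i : ι} (hi : {i} ∈ E) :
    lam {i} * Var[(clusterSurvives X {i}).indicator 1; μ]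
      ≤ cov[fun ω => ∑ c ∈ E, lam c * (clusterSurvives X c).indicator 1 ω,
          (clusterSurvives X {i}).indicator 1; μ] := by
  have := hind.isProbabilityMeasure
  have hY (c : Finset ι) : MemLp ((clusterSurvives X c).indicator (1 : Ω → ℝ)) 2 μ :=
    memLp_indicator_one (measurableSet_clusterSurvives hm c) 2
  rw [covariance_fun_sum_left' (fun c _ => (hY c).const_mul (lam c)) (hY {i}),
    ← covariance_self (hY {i}).aemeasurable]
  simp_rw [covariance_const_mul_left]
  exact single_le_sum (fun c hc => mul_nonneg (hlam c hc)
    (covariance_indicator_clusterSurvives_singleton_nonneg hm hind c i)) hi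

theorem sum_sq_mul_variance_le_variance_sum_indicator (hm : ∀ i, Measurable (X i))
    (hind : iIndepFun X μ) {E : Finset (Finset ι)} {lam : Finset ι → ℝ}
    (hlam : ∀ c ∈ E, 0 ≤ lam c) {G : Finset ι} (hG : ∀ i ∈ G, {i} ∈ E) :
    ∑ i ∈ G, lam {i} ^ 2 * Var[(clusterSurvives X {i}).indicator 1; μ]
      ≤ Var[fun ω => ∑ c ∈ E, lam c * (clusterSurvives X c).indicator 1 ω; μ] := by
  have := hind.isProbabilityMeasure
  have hY (c : Finset ι) : MemLp ((clusterSurvives X c).indicator (1 : Ω → ℝ)) 2 μ :=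
    memLp_indicator_one (measurableSet_clusterSurvives hm c) 2
  set f := fun ω => ∑ c ∈ E, lam c * (clusterSurvives X c).indicator 1 ω
  set g := fun ω => ∑ i ∈ G, lam {i} * (clusterSurvives X {i}).indicator 1 ω
  set S := ∑ i ∈ G, lam {i} ^ 2 * Var[(clusterSurvives X {i}).indicator 1; μ]
  have hf : MemLp f 2 μ := memLp_finsetSum E fun c _ => (hY c).const_mul (lam c)
  have hg : MemLp g 2 μ := memLp_finsetSum G fun i _ => (hY {i}).const_mul (lam {i})
  have hvar_g : Var[g; μ] = S := by
    rw [variance_fun_sum' fun i _ => (hY {i}).const_mul _]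
    refine sum_congr rfl fun i hi => ?_
    rw [sum_eq_single_of_mem i hi fun j _ hji => ?_]
    · rw [covariance_const_mul_left, covariance_const_mul_right,
        covariance_self (hY {i}).aemeasurable]
      ring
    · rw [covariance_const_mul_left, covariance_const_mul_right,
        covariance_indicator_clusterSurvives_of_disjoint hm hind
          (disjoint_singleton.2 hji.symm)]
      ring
  have hcov : S ≤ cov[f, g; μ] := by
    rw [covariance_fun_sum_right' (fun i _ => (hY {i}).const_mul _) hf]
    refine sum_le_sum fun i hi => ?_
    rw [covariance_const_mul_right, pow_two, mul_assoc]
    exact mul_le_mul_of_nonneg_left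
      (mul_variance_le_covariance_sum_indicator hm hind hlam (hG i hi)) (hlam _ (hG i hi))
  have hS : 0 ≤ S := sum_nonneg fun i _ => mul_nonneg (sq_nonneg _) (variance_nonneg _ _)
  linarith [two_mul_covariance_sub_variance_le_variance hf hg]

end ClusterSurvival

section Counting

variable {ι : Type*}

lemma sum_filter_card_eq_one_eq_sum_singleton {M : Type*} [AddCommMonoid M] [Fintype ι]
    {E : Finset (Finset ι)} (hE : ∀ i, {i} ∈ E) (f : Finset ι → M) :
    ∑ c ∈ E.filter (fun c => c.card = 1), f c = ∑ i, f {i} := by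
  have : E.filter (fun c => c.card = 1) = univ.image singleton := by
    ext c
    simp only [mem_filter, mem_image, mem_univ, true_and, card_eq_one]
    exact ⟨fun ⟨_, i, hc⟩ => ⟨i, hc.symm⟩, fun ⟨i, hc⟩ => ⟨hc ▸ hE i, i, hc.symm⟩⟩
  rw [this, sum_image fun i _ j _ h => singleton_injective h]

lemma sum_sub_card_filter_not_le_sum_filter (s : Finset ι) (P : ι → Prop) [DecidablePred P]
    (t : ι → ℝ) (ht : ∀ i ∈ s, t i ≤ 1) :
    ∑ i ∈ s, t i - #(s.filter fun i => ¬P i) ≤ ∑ i ∈ s.filter P, t i := by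
  have hbad : ∑ i ∈ s.filter (fun i => ¬P i), t i ≤ #(s.filter fun i => ¬P i) := by
    simpa using sum_le_card_nsmul _ t 1 fun i hi => ht i (mem_filter.1 hi).1
  rw [← sum_filter_add_sum_filter_not s P]
  linarith

end Counting

theorem variance_future_PD_lower_bound_C1_C2star_general
    (Ω : ℕ → Type) [∀ n, MeasurableSpace (Ω n)]
    (μ : ∀ n, Measure (Ω n))
    (surv : ∀ n, Fin (n + 1) → Ω n → Bool)
    (hmeas : ∀ n i, Measurable (surv n i))
    (hindep : ∀ n, iIndepFun (surv n) (μ n))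
    (p : ∀ n, Fin (n + 1) → ℝ)
    (hp : ∀ n i, ((μ n) {ω | surv n i ω = true}).toReal = p n i)
    (E : ∀ n, Finset (Finset (Fin (n + 1))))
    (hE_single : ∀ n, ∀ i : Fin (n + 1), {i} ∈ E n)
    (lam : ∀ n, Finset (Fin (n + 1)) → ℝ)
    (hlam : ∀ n c, lam n c ∈ Set.Icc (0 : ℝ) 1)
    (φ : ∀ n, Ω n → ℝ)
    (hφ : ∀ n ω, φ n ω =
      ∑ c ∈ E n, lam n c * (if ∃ i ∈ c, surv n i ω = true then 1 else 0))
    -- condition (C1)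
    (ε A α : ℝ) (hε : 0 < ε)
    (hC1 : ∀ n,
      ((Finset.univ.filter
          (fun i : Fin (n + 1) => p n i ∉ Set.Icc ε (1 - ε))).card : ℝ)
        ≤ A * ((n : ℝ) + 1) ^ α)
    -- condition (C2*)
    (B β : ℝ)
    (hC2star : ∀ n : ℕ,
      B * ((n : ℝ) + 1) ^ β
        ≤ ∑ c ∈ (E n).filter (fun c => c.card = 1), (lam n c) ^ 2) :
    ∀ n : ℕ,
      ε ^ 2 * (B * ((n : ℝ) + 1) ^ β - A * ((n : ℝ) + 1) ^ α)
        ≤ variance (φ n) (μ n) := by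
  intro n
  set G := univ.filter fun i : Fin (n + 1) => p n i ∈ Set.Icc ε (1 - ε)
  have hφn : φ n = fun ω => ∑ c ∈ E n, lam n c * (clusterSurvives (surv n) c).indicator 1 ω := by
    funext ω
    simp only [hφ, indicator_clusterSurvives_apply]
  have hgood : ∀ i ∈ G, ε ^ 2 ≤ p n i * (1 - p n i) := by
    intro i hi
    obtain ⟨hlo, hhi⟩ := (mem_filter.1 hi).2
    nlinarith
  have hpendant : B * ((n : ℝ) + 1) ^ β - A * ((n : ℝ) + 1) ^ α ≤ ∑ i ∈ G, lam n {i} ^ 2 := by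
    have hsplit := sum_sub_card_filter_not_le_sum_filter univ (fun i => p n i ∈ Set.Icc ε (1 - ε))
      (fun i => lam n {i} ^ 2) fun i _ => pow_le_one₀ (hlam n {i}).1 (hlam n {i}).2
    have hC2 := hC2star n
    rw [sum_filter_card_eq_one_eq_sum_singleton (hE_single n)] at hC2
    linarith [hC1 n]
  calc ε ^ 2 * (B * ((n : ℝ) + 1) ^ β - A * ((n : ℝ) + 1) ^ α)
      ≤ ε ^ 2 * ∑ i ∈ G, lam n {i} ^ 2 := mul_le_mul_of_nonneg_left hpendant (sq_nonneg ε)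
    _ ≤ ∑ i ∈ G, lam n {i} ^ 2 * (p n i * (1 - p n i)) := by
        rw [mul_sum]
        refine sum_le_sum fun i hi => ?_
        rw [mul_comm]
        exact mul_le_mul_of_nonneg_left (hgood i hi) (sq_nonneg _)
    _ = ∑ i ∈ G, lam n {i} ^ 2 * Var[(clusterSurvives (surv n) {i}).indicator 1; μ n] := by
        simp only [variance_indicator_clusterSurvives_singleton (hmeas n) (hindep n),
          measureReal_def, hp]
    _ ≤ variance (φ n) (μ n) := hφn ▸ sum_sq_mul_variance_le_variance_sum_indicator (hmeas n)
          (hindep n) (fun c _ => (hlam n c).1) fun i _ => hE_single n i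

/-- Let `(T_n)` be a sequence of rooted phylogenetic trees, the `n`-th
with taxon set `Fin (n+1)`, cluster family `E n` (laminar, containing all singletons:
these are the pendant edges), edge lengths `lam n c ∈ [0,1]` and survival probabilities
`p n`, and let `φ n` be the future phylogenetic diversity under the g-FOB model.  Assume
(C1): for some `ε > 0`, `A ≥ 0`, `α ≥ 0`, at most `A (n+1)^α` taxa have survival
probability outside `[ε, 1-ε]`; and (C2*): for some `B > 0` and `β`, the sum of squares of
pendant edge lengths is at least `B (n+1)^β`.  Then for every `n`,
`Var[φ n] ≥ ε² (B (n+1)^β - A (n+1)^α)`. -/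
theorem variance_future_PD_lower_bound_C1_C2star
    (Ω : ℕ → Type) [∀ n, MeasurableSpace (Ω n)]
    (μ : ∀ n, Measure (Ω n)) [∀ n, IsProbabilityMeasure (μ n)]
    (surv : ∀ n, Fin (n + 1) → Ω n → Bool)
    (hmeas : ∀ n i, Measurable (surv n i))
    (hindep : ∀ n, iIndepFun (surv n) (μ n))
    (p : ∀ n, Fin (n + 1) → ℝ) (hp01 : ∀ n i, p n i ∈ Set.Icc (0 : ℝ) 1)
    (hp : ∀ n i, ((μ n) {ω | surv n i ω = true}).toReal = p n i)
    (E : ∀ n, Finset (Finset (Fin (n + 1))))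
    (hE_ne : ∀ n, ∀ c ∈ E n, c.Nonempty)
    (hE_laminar : ∀ n, ∀ c ∈ E n, ∀ d ∈ E n, c ⊆ d ∨ d ⊆ c ∨ Disjoint c d)
    (hE_single : ∀ n, ∀ i : Fin (n + 1), {i} ∈ E n)
    (lam : ∀ n, Finset (Fin (n + 1)) → ℝ)
    (hlam : ∀ n c, lam n c ∈ Set.Icc (0 : ℝ) 1)
    (φ : ∀ n, Ω n → ℝ)
    (hφ : ∀ n ω, φ n ω =
      ∑ c ∈ E n, lam n c * (if ∃ i ∈ c, surv n i ω = true then 1 else 0))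
    -- condition (C1)
    (ε A α : ℝ) (hε : 0 < ε) (hA : 0 ≤ A) (hα : 0 ≤ α)
    (hC1 : ∀ n,
      ((Finset.univ.filter
          (fun i : Fin (n + 1) => p n i ∉ Set.Icc ε (1 - ε))).card : ℝ)
        ≤ A * ((n : ℝ) + 1) ^ α)
    -- condition (C2*)
    (B β : ℝ) (hB : 0 < B)
    (hC2star : ∀ n : ℕ,
      B * ((n : ℝ) + 1) ^ β
        ≤ ∑ c ∈ (E n).filter (fun c => c.card = 1), (lam n c) ^ 2) :
    ∀ n : ℕ,
      ε ^ 2 * (B * ((n : ℝ) + 1) ^ β - A * ((n : ℝ) + 1) ^ α)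
        ≤ variance (φ n) (μ n) :=
  variance_future_PD_lower_bound_C1_C2star_general Ω μ surv hmeas hindep p hp E hE_single lam hlam φ
    hφ ε A α hε hC1 B β hC2star
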